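/- For every n ≥ 1 and every real q ∈ [-1, 1] with q ≠ 0, the weighted Catalan convolution sum w_n(q) = Σ_{m=1}^{n} (1+q)^m Σ_{i_1,...,i_m ≥ 0, i_1+...+i_m = n-m} C_{i_1} · ... · C_{i_m} equals ((1+q)/q) · ( (1+q)^{2n-1} / q^{n-1} − Σ_{m=1}^{n} C_{m-1} · (1+q)^{2(n-m)} / q^{n-m} ). -/

import Mathlib

open Finset

/-- The `m`-fold Catalan convolution: the sum over all tuples `(i_1, …, i_m)` of
nonnegative integers with `i_1 + … + i_m = k` of `C_{i_1} ⋯ C_{i_m}`. -/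
def catConv (m k : ℕ) : ℕ :=
  ∑ i ∈ Finset.Nat.antidiagonalTuple m k, ∏ j, catalan (i j)

/-- The weighted Catalan convolution
`w_n(q) = ∑_{m=1}^{n} (1+q)^m ∑_{i_1,…,i_m ≥ 0, i_1+…+i_m = n-m} C_{i_1} ⋯ C_{i_m}`,
with `w_0(q) = 1`. -/
noncomputable def w (q : ℝ) (n : ℕ) : ℝ :=
  if n = 0 then 1 else ∑ m ∈ Finset.Icc 1 n, (1 + q) ^ m * (catConv m (n - m) : ℝ)

lemma sum_Icc_one (n : ℕ) (f : ℕ → ℝ) :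
    ∑ m ∈ Finset.Icc 1 n, f m = ∑ j ∈ Finset.range n, f (j + 1) := by
  rw [← Finset.Ico_add_one_right_eq_Icc, Finset.sum_Ico_eq_sum_range]
  simp only [Nat.add_sub_cancel]
  exact Finset.sum_congr rfl fun i _ => by rw [add_comm 1 i]

lemma catConv_succ (m k : ℕ) :
    catConv (m + 1) k
      = ∑ p ∈ Finset.HasAntidiagonal.antidiagonal k, catalan p.1 * catConv m p.2 := by
  unfold catConv
  simp_rw [Finset.mul_sum]
  rw [Finset.sum_sigma']
  refine (Finset.sum_nbij' (i := fun x : Σ _ : ℕ × ℕ, Fin m → ℕ => Fin.cons x.1.1 x.2)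
      (j := fun x : Fin (m + 1) → ℕ => ⟨(x 0, ∑ j : Fin m, x j.succ), Fin.tail x⟩)
      ?_ ?_ ?_ ?_ ?_).symm
  · rintro ⟨⟨a, b⟩, x⟩ hx
    simp only [Finset.mem_sigma, Finset.HasAntidiagonal.mem_antidiagonal,
      Finset.Nat.mem_antidiagonalTuple] at hx ⊢
    rw [Fin.sum_cons, hx.2, hx.1]
  · intro x hx
    simp only [Finset.Nat.mem_antidiagonalTuple] at hx
    simp only [Finset.mem_sigma, Finset.HasAntidiagonal.mem_antidiagonal,
      Finset.Nat.mem_antidiagonalTuple]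
    exact ⟨by rw [← hx, Fin.sum_univ_succ], rfl⟩
  · rintro ⟨⟨a, b⟩, x⟩ hx
    simp only [Finset.mem_sigma, Finset.HasAntidiagonal.mem_antidiagonal,
      Finset.Nat.mem_antidiagonalTuple] at hx
    simp only [Fin.cons_zero, Fin.tail_cons, Fin.cons_succ]
    congr 1
    exact congrArg (Prod.mk a) hx.2
  · intro x _
    exact Fin.cons_self_tail x
  · rintro ⟨⟨a, b⟩, x⟩ _
    rw [Fin.prod_univ_succ]
    simp

/-- `W` is `w` extended with the `m = 0` term, which vanishes for `n ≥ 1`. -/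
noncomputable def W (q : ℝ) (n : ℕ) : ℝ :=
  ∑ m ∈ Finset.range (n + 1), (1 + q) ^ m * (catConv m (n - m) : ℝ)

lemma catConv_zero_succ (k : ℕ) : catConv 0 (k + 1) = 0 := by
  simp [catConv]

lemma w_eq_W (q : ℝ) (n : ℕ) (hn : 1 ≤ n) : w q n = W q n := by
  obtain ⟨k, rfl⟩ : ∃ k, n = k + 1 := ⟨n - 1, by omega⟩
  rw [w, if_neg (by omega), W, Finset.sum_range_succ', sum_Icc_one]
  simp [catConv_zero_succ]

/-- triangle swap -/
lemma sum_triangle_swap (n : ℕ) (f : ℕ → ℕ → ℝ) :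
    ∑ i ∈ Finset.range (n + 1), ∑ j ∈ Finset.range (n + 1 - i), f i j
      = ∑ j ∈ Finset.range (n + 1), ∑ i ∈ Finset.range (n + 1 - j), f i j := by
  rw [Finset.sum_sigma', Finset.sum_sigma']
  refine Finset.sum_nbij' (i := fun x : Σ _ : ℕ, ℕ => (⟨x.2, x.1⟩ : Σ _ : ℕ, ℕ))
    (j := fun x : Σ _ : ℕ, ℕ => (⟨x.2, x.1⟩ : Σ _ : ℕ, ℕ)) ?_ ?_ ?_ ?_ ?_ <;>
    rintro ⟨a, b⟩ h <;> simp_all <;> omega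

/-- triangle regroup by diagonal -/
lemma sum_triangle_group (n : ℕ) (f : ℕ → ℕ → ℝ) :
    ∑ i ∈ Finset.range (n + 1), ∑ j ∈ Finset.range (n - i), f i j
      = ∑ r ∈ Finset.range n, ∑ i ∈ Finset.range (r + 1), f i (r - i) := by
  rw [Finset.sum_sigma', Finset.sum_sigma']
  refine Finset.sum_nbij' (i := fun x : Σ _ : ℕ, ℕ => (⟨x.1 + x.2, x.1⟩ : Σ _ : ℕ, ℕ))
    (j := fun x : Σ _ : ℕ, ℕ => (⟨x.2, x.1 - x.2⟩ : Σ _ : ℕ, ℕ)) ?_ ?_ ?_ ?_ ?_ <;>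
    rintro ⟨a, b⟩ h <;> simp_all [Sigma.ext_iff] <;> omega

lemma W_zero (q : ℝ) : W q 0 = 1 := by
  simp [W, catConv]

lemma W_succ (q : ℝ) (k : ℕ) :
    W q (k + 1) = (1 + q) * ∑ j ∈ Finset.range (k + 1), (catalan j : ℝ) * W q (k - j) := by
  rw [W, Finset.sum_range_succ']
  simp only [Nat.sub_zero, pow_zero, one_mul, catConv_zero_succ, Nat.cast_zero, add_zero]
  have h1 : ∀ m ∈ Finset.range (k + 1),
      (1 + q) ^ (m + 1) * (catConv (m + 1) (k + 1 - (m + 1)) : ℝ)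
        = ∑ j ∈ Finset.range (k + 1 - m),
            (1 + q) ^ (m + 1) * ((catalan j : ℝ) * (catConv m (k - m - j) : ℝ)) := by
    intro m hm
    simp only [Finset.mem_range] at hm
    rw [show k + 1 - (m + 1) = k - m by omega, catConv_succ,
      Finset.Nat.sum_antidiagonal_eq_sum_range_succ_mk,
      show (k - m).succ = k + 1 - m by omega]
    push_cast
    rw [Finset.mul_sum]
  rw [Finset.sum_congr rfl h1, sum_triangle_swap, Finset.mul_sum]
  refine Finset.sum_congr rfl fun j hj => ?_
  simp only [Finset.mem_range] at hj
  rw [W, Finset.mul_sum, Finset.mul_sum, show k - j + 1 = k + 1 - j by omega]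
  refine Finset.sum_congr rfl fun m hm => ?_
  simp only [Finset.mem_range] at hm
  rw [show k - m - j = k - j - m by omega]
  ring

/-- The conjectured closed form, in the variable `t = (1+q)²/q`. -/
noncomputable def F (q : ℝ) (n : ℕ) : ℝ :=
  ((1 + q) ^ 2 / q) ^ n
    - (1 + q) / q * ∑ j ∈ Finset.range n, (catalan j : ℝ) * ((1 + q) ^ 2 / q) ^ (n - 1 - j)

lemma F_zero (q : ℝ) : F q 0 = 1 := by simp [F]

lemma F_succ (q : ℝ) (hq0 : q ≠ 0) (k : ℕ) :
    F q (k + 1) = (1 + q) * ∑ j ∈ Finset.range (k + 1), (catalan j : ℝ) * F q (k - j) := by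
  set t : ℝ := (1 + q) ^ 2 / q with ht
  set s : ℝ := (1 + q) / q with hs
  have hts : t = s + (1 + q) := by rw [ht, hs]; field_simp
  have hss : (1 + q) - (1 + q) * s = -s := by rw [hs]; field_simp; ring
  have hF : ∀ j ∈ Finset.range (k + 1),
      (catalan j : ℝ) * F q (k - j)
        = (catalan j : ℝ) * t ^ (k - j)
          - s * ∑ i ∈ Finset.range (k - j),
              (catalan j : ℝ) * ((catalan i : ℝ) * t ^ (k - 1 - j - i)) := by
    intro j hj
    simp only [Finset.mem_range] at hj
    have hexp : ∀ i ∈ Finset.range (k - j),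
        (catalan i : ℝ) * t ^ (k - j - 1 - i) = (catalan i : ℝ) * t ^ (k - 1 - j - i) := by
      intro i hi
      simp only [Finset.mem_range] at hi
      rw [show k - j - 1 - i = k - 1 - j - i by omega]
    rw [F, ← ht, Finset.sum_congr rfl hexp, mul_sub, mul_left_comm, Finset.mul_sum]
  rw [Finset.sum_congr rfl hF, Finset.sum_sub_distrib, ← Finset.mul_sum]
  have hdouble : ∑ j ∈ Finset.range (k + 1), ∑ i ∈ Finset.range (k - j),
      (catalan j : ℝ) * ((catalan i : ℝ) * t ^ (k - 1 - j - i))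
        = ∑ r ∈ Finset.range k, (catalan (r + 1) : ℝ) * t ^ (k - 1 - r) := by
    rw [sum_triangle_group k
      (fun j i => (catalan j : ℝ) * ((catalan i : ℝ) * t ^ (k - 1 - j - i)))]
    refine Finset.sum_congr rfl fun r hr => ?_
    simp only [Finset.mem_range] at hr
    have h2 : ∀ j ∈ Finset.range (r + 1),
        (catalan j : ℝ) * ((catalan (r - j) : ℝ) * t ^ (k - 1 - j - (r - j)))
          = ((catalan j * catalan (r - j) : ℕ) : ℝ) * t ^ (k - 1 - r) := by
      intro j hj
      simp only [Finset.mem_range] at hj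
      rw [show k - 1 - j - (r - j) = k - 1 - r by omega]
      push_cast; ring
    rw [Finset.sum_congr rfl h2, ← Finset.sum_mul, ← Nat.cast_sum,
      ← Finset.Nat.sum_antidiagonal_eq_sum_range_succ (fun x y => catalan x * catalan y) r,
      ← catalan_succ']
  rw [hdouble]
  have hsplit : ∑ j ∈ Finset.range (k + 1), (catalan j : ℝ) * t ^ (k - j)
      = (∑ r ∈ Finset.range k, (catalan (r + 1) : ℝ) * t ^ (k - 1 - r)) + t ^ k := by
    rw [Finset.sum_range_succ']
    simp only [catalan_zero, Nat.cast_one, one_mul, Nat.sub_zero]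
    exact congrArg (· + t ^ k) (Finset.sum_congr rfl fun r hr => by
      simp only [Finset.mem_range] at hr
      rw [show k - (r + 1) = k - 1 - r by omega])
  have hFk : ∑ j ∈ Finset.range (k + 1), (catalan j : ℝ) * t ^ (k + 1 - 1 - j)
      = ∑ j ∈ Finset.range (k + 1), (catalan j : ℝ) * t ^ (k - j) := by
    refine Finset.sum_congr rfl fun j hj => ?_
    congr 2
  rw [F, ← ht, ← hs, hFk, hsplit, pow_succ]
  set S : ℝ := ∑ r ∈ Finset.range k, (catalan (r + 1) : ℝ) * t ^ (k - 1 - r) with hS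
  linear_combination (t ^ k) * hts - S * hss

lemma W_eq_F (q : ℝ) (hq0 : q ≠ 0) : ∀ n, W q n = F q n := by
  intro n
  induction n using Nat.strong_induction_on with
  | _ n ih =>
    match n with
    | 0 => rw [W_zero, F_zero]
    | k + 1 =>
      rw [W_succ, F_succ q hq0]
      congr 1
      refine Finset.sum_congr rfl fun j hj => ?_
      simp only [Finset.mem_range] at hj
      rw [ih (k - j) (by omega)]

/-- For `n ≥ 1` and `q ∈ [-1,1]`, `q ≠ 0`, the weighted Catalan convolution has the
explicit form
`w_n(q) = ((1+q)/q) ((1+q)^{2n-1}/q^{n-1} - ∑_{m=1}^{n} C_{m-1} (1+q)^{2(n-m)}/q^{n-m})`. -/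
theorem weighted_catalan_convolution_explicit
    (n : ℕ) (hn : 1 ≤ n) (q : ℝ) (hq : q ∈ Set.Icc (-1 : ℝ) 1) (hq0 : q ≠ 0) :
    w q n = (1 + q) / q *
      ((1 + q) ^ (2 * n - 1) / q ^ (n - 1)
        - ∑ m ∈ Finset.Icc 1 n, (catalan (m - 1) : ℝ) * (1 + q) ^ (2 * (n - m)) / q ^ (n - m)) := by
  rw [w_eq_W q n hn, W_eq_F q hq0, F, mul_sub]
  have hpow : ∀ i : ℕ, ((1 + q) ^ 2 / q) ^ i = (1 + q) ^ (2 * i) / q ^ i := by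
    intro i
    rw [div_pow, ← pow_mul]
  congr 1
  · obtain ⟨k, rfl⟩ : ∃ k, n = k + 1 := ⟨n - 1, by omega⟩
    rw [hpow, show 2 * (k + 1) = (2 * k + 1) + 1 by omega]
    rw [show 2 * k + 1 + 1 - 1 = 2 * k + 1 by omega, show k + 1 - 1 = k from rfl,
      pow_succ, pow_succ]
    field_simp
    ring
  · congr 1
    rw [sum_Icc_one n (fun m => (catalan (m - 1) : ℝ) * (1 + q) ^ (2 * (n - m)) / q ^ (n - m))]
    refine Finset.sum_congr rfl fun j hj => ?_
    simp only [Finset.mem_range] at hj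
    rw [show j + 1 - 1 = j from rfl, show n - (j + 1) = n - 1 - j by omega, hpow]
    ring
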